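/- arXiv:2203.12303 — 2 statements merged into one kernel-verified Lean document; each statement's English description precedes it below -/
import Mathlib

section
/- Let V : ℝⁿ → ℝ be C¹ with dV/dt ≤ λV + κV² + ω along trajectories of ẋ = f(x), where λ < 0, κ, ω > 0 and λ² > 4κω. Then with γ̄ = (−λ + √(λ²−4κω))/(2κ), the sublevel set {x : V(x) ≤ γ̄} is forward invariant under the flow. -/
/-- If V ≥ 0 is C¹ and satisfies dV/dt ≤ λV + κV² + ω along trajectories,
with λ < 0, κ, ω > 0 and λ² > 4κω, then the sublevel set {x : V x ≤ γ̄} with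
γ̄ = (−λ + √(λ²−4κω))/(2κ) is forward invariant under the flow. -/
theorem stmt7 {n : ℕ} (f : EuclideanSpace ℝ (Fin n) → EuclideanSpace ℝ (Fin n))
    (F : ℝ → EuclideanSpace ℝ (Fin n) → EuclideanSpace ℝ (Fin n))
    (V : EuclideanSpace ℝ (Fin n) → ℝ) (Vdot : EuclideanSpace ℝ (Fin n) → ℝ)
    (lam κ ω : ℝ) (hlam : lam < 0) (hκ : 0 < κ) (hω : 0 < ω)
    (hdisc : lam ^ 2 > 4 * κ * ω)
    (hVC1 : ContDiff ℝ 1 V) (hVnonneg : ∀ x, 0 ≤ V x)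
    (hF0 : ∀ x, F 0 x = x)
    (hchain : ∀ x₀ : EuclideanSpace ℝ (Fin n), ∀ t : ℝ, 0 ≤ t →
      HasDerivAt (fun s => V (F s x₀)) (Vdot (F t x₀)) t)
    (hineq : ∀ x, Vdot x ≤ lam * V x + κ * (V x) ^ 2 + ω) :
    ∀ x₀, V x₀ ≤ (-lam + Real.sqrt (lam ^ 2 - 4 * κ * ω)) / (2 * κ) →
      ∀ t : ℝ, 0 ≤ t →
        V (F t x₀) ≤ (-lam + Real.sqrt (lam ^ 2 - 4 * κ * ω)) / (2 * κ) := by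
  set D : ℝ := Real.sqrt (lam ^ 2 - 4 * κ * ω) with hDdef
  set gbar : ℝ := (-lam + D) / (2 * κ) with hgbar
  have hDpos : 0 < D := Real.sqrt_pos.2 (by linarith)
  have hD2 : D ^ 2 = lam ^ 2 - 4 * κ * ω := Real.sq_sqrt (by linarith)
  have h2 : 2 * κ * gbar = -lam + D := by
    rw [hgbar]; field_simp
  have hroot : κ * gbar ^ 2 + lam * gbar + ω = 0 := by nlinarith [sq_nonneg gbar]
  set L : ℝ := D + κ + 1 with hL
  have hLpos : 0 < L := by positivity
  intro x₀ hx₀ t ht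
  rcases ht.eq_or_lt with h0 | htpos
  · rw [← h0, hF0]; exact hx₀
  -- main estimate for small ε
  have key : ∀ ε : ℝ, 0 < ε → ε ≤ Real.exp (-(L * t)) →
      V (F t x₀) ≤ gbar + ε * Real.exp (L * t) := by
    intro ε hε hεle
    have hB : ∀ x : ℝ, HasDerivAt (fun s => gbar + ε * Real.exp (L * s))
        (ε * (Real.exp (L * x) * L)) x := by
      intro x
      have h1 : HasDerivAt (fun s : ℝ => L * s) L x := by
        simpa using (hasDerivAt_id x).const_mul L
      exact (h1.exp.const_mul ε).const_add gbar
    have hf : ContinuousOn (fun s => V (F s x₀)) (Set.Icc 0 t) := fun s hs =>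
      (hchain x₀ s hs.1).continuousAt.continuousWithinAt
    have hf' : ∀ s ∈ Set.Ico 0 t,
        HasDerivWithinAt (fun s => V (F s x₀)) (Vdot (F s x₀)) (Set.Ici s) s := fun s hs =>
      (hchain x₀ s hs.1).hasDerivWithinAt
    have ha : V (F 0 x₀) ≤ gbar + ε * Real.exp (L * 0) := by
      rw [hF0]
      have : 0 < ε * Real.exp (L * 0) := by positivity
      linarith
    have bound : ∀ s ∈ Set.Ico 0 t,
        V (F s x₀) = gbar + ε * Real.exp (L * s) →
        Vdot (F s x₀) < ε * (Real.exp (L * s) * L) := by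
      intro s hs heq
      set δ : ℝ := ε * Real.exp (L * s) with hδ
      have hδpos : 0 < δ := by positivity
      have hδle : δ ≤ 1 := by
        have h1 : δ ≤ Real.exp (-(L * t)) * Real.exp (L * s) :=
          mul_le_mul_of_nonneg_right hεle (Real.exp_pos _).le
        have h2' : Real.exp (-(L * t)) * Real.exp (L * s) = Real.exp (L * s - L * t) := by
          rw [← Real.exp_add]; ring_nf
        have h3 : Real.exp (L * s - L * t) ≤ 1 := by
          rw [Real.exp_le_one_iff]
          have : s ≤ t := le_of_lt hs.2
          nlinarith
        linarith [h2' ▸ h1]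
      have hV : Vdot (F s x₀) ≤ lam * (gbar + δ) + κ * (gbar + δ) ^ 2 + ω := by
        have := hineq (F s x₀); rwa [heq] at this
      have expand : lam * (gbar + δ) + κ * (gbar + δ) ^ 2 + ω = δ * (D + κ * δ) := by
        linear_combination hroot + δ * h2
      have goal' : lam * (gbar + δ) + κ * (gbar + δ) ^ 2 + ω < δ * L := by
        rw [expand, hL]
        have hlt : D + κ * δ < D + κ + 1 := by nlinarith
        exact mul_lt_mul_of_pos_left hlt hδpos
      have : ε * (Real.exp (L * s) * L) = δ * L := by rw [hδ]; ring
      linarith [this ▸ goal']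
    have := image_le_of_deriv_right_lt_deriv_boundary hf hf' ha hB bound
      (Set.right_mem_Icc.2 ht)
    simpa using this
  -- let ε → 0
  by_contra hcon
  push_neg at hcon
  set C : ℝ := Real.exp (L * t) with hC
  have hCpos : 0 < C := Real.exp_pos _
  set g : ℝ := V (F t x₀) with hg
  set ε : ℝ := min (Real.exp (-(L * t))) ((g - gbar) / (2 * C)) with hε
  have hεpos : 0 < ε := lt_min (Real.exp_pos _) (div_pos (by linarith) (by positivity))
  have h1 := key ε hεpos (min_le_left _ _)
  have h2' : ε ≤ (g - gbar) / (2 * C) := min_le_right _ _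
  have : ε * C ≤ (g - gbar) / 2 := by
    have := mul_le_mul_of_nonneg_right h2' hCpos.le
    calc ε * C ≤ (g - gbar) / (2 * C) * C := this
      _ = (g - gbar) / 2 := by field_simp
  linarith
end

section
/- Suppose for each i = 1,…,M the C¹ function Vᵢ ≥ 0 satisfies dVᵢ/dt ≤ λᵢVᵢ + κᵢVᵢ² + ωᵢ along trajectories with λᵢ < 0, κᵢ, ωᵢ > 0. Let β = minᵢ(−λᵢ), αᵢ > 0, γ̄ᵢ > 0, γ = minᵢ(αᵢγ̄ᵢ). If γβ ≥ Σᵢ αᵢ(κᵢ γ̄ᵢ² + ωᵢ), then at every point x with Σᵢ αᵢVᵢ(x) ≤ γ one has Σᵢ αᵢ (dVᵢ/dt)(x) ≤ β(γ − Σᵢ αᵢVᵢ(x)). -/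
/-- Core differential inequality of Theorem 1. If each nonnegative Vᵢ
satisfies V̇ᵢ ≤ λᵢVᵢ + κᵢVᵢ² + ωᵢ with λᵢ < 0, κᵢ, ωᵢ > 0, β = minᵢ(−λᵢ), αᵢ > 0,
γ̄ᵢ > 0, γ = minᵢ(αᵢγ̄ᵢ), and γβ ≥ Σᵢ αᵢ(κᵢγ̄ᵢ² + ωᵢ), then at every x with
Σᵢ αᵢVᵢ(x) ≤ γ one has Σᵢ αᵢ V̇ᵢ(x) ≤ β(γ − Σᵢ αᵢVᵢ(x)). -/
theorem stmt9 {n M : ℕ} [NeZero M]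
    (V Vdot : Fin M → EuclideanSpace ℝ (Fin n) → ℝ)
    (lam κ ω α γb : Fin M → ℝ)
    (hVnonneg : ∀ i x, 0 ≤ V i x)
    (hlam : ∀ i, lam i < 0) (hκ : ∀ i, 0 < κ i) (hω : ∀ i, 0 < ω i)
    (hα : ∀ i, 0 < α i) (hγb : ∀ i, 0 < γb i)
    (hineq : ∀ i x, Vdot i x ≤ lam i * V i x + κ i * (V i x) ^ 2 + ω i)
    (β γ : ℝ)
    (hβ : β = Finset.univ.inf' Finset.univ_nonempty (fun i => -lam i))
    (hγ : γ = Finset.univ.inf' Finset.univ_nonempty (fun i => α i * γb i))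
    (hcond : γ * β ≥ ∑ i, α i * (κ i * (γb i) ^ 2 + ω i)) :
    ∀ x, (∑ i, α i * V i x) ≤ γ →
      (∑ i, α i * Vdot i x) ≤ β * (γ - ∑ i, α i * V i x) := by

  intro x hx
  have hVle : ∀ i, V i x ≤ γb i := by
    intro i
    have h1 : α i * V i x ≤ ∑ j, α j * V j x := by
      apply Finset.single_le_sum (f := fun j => α j * V j x)
      · intro j _; exact mul_nonneg (hα j).le (hVnonneg j x)
      · exact Finset.mem_univ i
    have h2 : γ ≤ α i * γb i := by
      rw [hγ]; exact Finset.inf'_le _ (Finset.mem_univ i)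
    have := le_trans h1 (le_trans hx h2)
    exact le_of_mul_le_mul_left (by linarith) (hα i)
  have hβle : ∀ i, β ≤ -lam i := by
    intro i; rw [hβ]; exact Finset.inf'_le _ (Finset.mem_univ i)
  have key : ∀ i, Vdot i x ≤ -β * V i x + (κ i * (γb i) ^ 2 + ω i) := by
    intro i
    have h1 := hineq i x
    have h2 : lam i * V i x ≤ -β * V i x :=
      mul_le_mul_of_nonneg_right (by linarith [hβle i]) (hVnonneg i x)
    have h3 : κ i * (V i x) ^ 2 ≤ κ i * (γb i) ^ 2 :=
      mul_le_mul_of_nonneg_left (pow_le_pow_left₀ (hVnonneg i x) (hVle i) 2) (hκ i).le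
    linarith
  calc (∑ i, α i * Vdot i x)
      ≤ ∑ i, α i * (-β * V i x + (κ i * (γb i) ^ 2 + ω i)) := by
        apply Finset.sum_le_sum
        intro i _
        exact mul_le_mul_of_nonneg_left (key i) (hα i).le
    _ = -β * (∑ i, α i * V i x) + ∑ i, α i * (κ i * (γb i) ^ 2 + ω i) := by
        rw [Finset.mul_sum, ← Finset.sum_add_distrib]
        congr 1; ext i; ring
    _ ≤ β * (γ - ∑ i, α i * V i x) := by nlinarith
end
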